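/- Let κ be the unique positive real with ψ₁₂(κi) = 0, and define τ = 2νσ(2−σ)(κ²+1)/(2 − σ(κ²+1)). Then: τ = −2(κ²+1)·μ/(κi)^σ (in particular this quantity is real); 2.1647 < τ < 2.1648; the derivative of ψ₁₂ is ψ₁₂′(z) = (μ/z^{1+σ})·(z² − 1); and ψ₁₂′(κi)·(2κi/τ) = 1 (the normalization making Q have a 1-parabolic fixed point at ∞). -/

import Mathlib

/-!
The phase `e^{iσπ/2}` of `μ` cancels that of the principal power `(κi)^σ`, so `ψ₁₂(κi) = 0` is
the real equation `ν κ^σ + (C/3)(σ(κ²+1) - 2) = 0` with `C = √(2/(1 - cos σπ)) = √(6/(3+√5))`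
(as `cos σπ = -√5/3`). Solving it for `ν` gives the closed form of `τ`, and the closed form of
`τ` is exactly the normalisation `ψ₁₂'(κi)·2κi/τ = 1`. The left side is negative for `κ ≤ 1` and
strictly increasing on `[1, ∞)`, so interval bounds on `σ` (arctan series), `ν`, `C` and on
`x^σ` (exponential series) trap `κ` in `(2.2142189, 2.2142192)`, which pins `τ ≈ 2.1647948`.
-/

open Complex

/-- `σ = (2/π)·arctan((3+√5)/2)`. -/
noncomputable def sigma : ℝ := 2 / Real.pi * Real.arctan ((3 + Real.sqrt 5) / 2)

/-- `ν = 1 - 2√5/3`. -/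
noncomputable def nu : ℝ := 1 - 2 * Real.sqrt 5 / 3

/-- `μ = (σ(σ-2)/3)·√(2/(1-cos(σπ)))·e^{iσπ/2}`. -/
noncomputable def mu : ℂ :=
  ((sigma * (sigma - 2) / 3 : ℝ) : ℂ) *
    ((Real.sqrt (2 / (1 - Real.cos (sigma * Real.pi))) : ℝ) : ℂ) *
    Complex.exp (((sigma * Real.pi / 2 : ℝ) : ℂ) * I)

/-- `ψ₁₂(z) = (μ/z^σ)·(z²/(2-σ) + 1/σ) + ν`, with the principal power `z^σ`. -/
noncomputable def psi12 (z : ℂ) : ℂ :=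
  mu / z ^ (sigma : ℂ) * (z ^ 2 / (2 - (sigma : ℂ)) + 1 / (sigma : ℂ)) + (nu : ℂ)

/-- `τ = 2νσ(2-σ)(κ²+1)/(2 - σ(κ²+1))`. -/
noncomputable def tauOf (κ : ℝ) : ℝ :=
  2 * nu * sigma * (2 - sigma) * (κ ^ 2 + 1) / (2 - sigma * (κ ^ 2 + 1))

open Finset Filter Topology

namespace Real

lemma antitone_arctan_series_terms {x : ℝ} (h0 : 0 ≤ x) (h1 : x ≤ 1) :
    Antitone fun i : ℕ => x ^ (2 * i + 1) / (2 * i + 1) := by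
  refine antitone_nat_of_succ_le fun i => ?_
  push_cast
  exact div_le_div₀ (by positivity) (pow_le_pow_of_le_one h0 h1 (by omega)) (by positivity)
    (by linarith)

lemma tendsto_arctan_series {x : ℝ} (h0 : 0 ≤ x) (h1 : x < 1) :
    Tendsto (fun n => ∑ i ∈ range n, (-1) ^ i * (x ^ (2 * i + 1) / (2 * i + 1))) atTop
      (𝓝 (arctan x)) := by
  have h := (hasSum_arctan (x := x) (by rwa [norm_of_nonneg h0])).tendsto_sum_nat
  simpa only [mul_div_assoc, Nat.cast_add, Nat.cast_mul, Nat.cast_ofNat, Nat.cast_one] using h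

lemma sum_range_even_le_arctan {x : ℝ} (h0 : 0 ≤ x) (h1 : x < 1) (k : ℕ) :
    ∑ i ∈ range (2 * k), (-1) ^ i * (x ^ (2 * i + 1) / (2 * i + 1)) ≤ arctan x :=
  (antitone_arctan_series_terms h0 h1.le).alternating_series_le_tendsto
    (tendsto_arctan_series h0 h1) k

lemma arctan_le_sum_range_odd {x : ℝ} (h0 : 0 ≤ x) (h1 : x < 1) (k : ℕ) :
    arctan x ≤ ∑ i ∈ range (2 * k + 1), (-1) ^ i * (x ^ (2 * i + 1) / (2 * i + 1)) :=
  (antitone_arctan_series_terms h0 h1.le).tendsto_le_alternating_series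
    (tendsto_arctan_series h0 h1) k

end Real

lemma sqrt_five_bounds : 2.2360679774 < √5 ∧ √5 < 2.2360679775 :=
  ⟨(Real.lt_sqrt (by norm_num)).2 (by norm_num), (Real.sqrt_lt' (by norm_num)).2 (by norm_num)⟩

-- `(3 - √5)/2 = ((3 + √5)/2)⁻¹ ≈ 0.38`, where the arctan series converges fast.
lemma sigma_eq_one_sub_arctan : sigma = 1 - 2 / Real.pi * Real.arctan ((3 - √5) / 2) := by
  obtain ⟨h5, -⟩ := sqrt_five_bounds
  have hpos : 0 < (3 + √5) / 2 := by positivity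
  have hinv : ((3 + √5) / 2)⁻¹ = (3 - √5) / 2 := by
    refine inv_eq_of_mul_eq_one_right ?_
    nlinarith [Real.sq_sqrt (show (0 : ℝ) ≤ 5 by norm_num)]
  rw [← hinv, Real.arctan_inv_of_pos hpos, sigma]
  field_simp
  ring

lemma sigma_bounds : 0.767720452559 ≤ sigma ∧ sigma ≤ 0.7677204754 := by
  obtain ⟨h5l, h5u⟩ := sqrt_five_bounds
  set q := (3 - √5) / 2 with hq
  have hql : 0.38196601125 ≤ q := by linarith
  have hqu : q ≤ 0.3819660113 := by linarith
  have harctan_l : 0.364863824032 ≤ Real.arctan q := by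
    refine le_trans ?_ (Real.arctan_strictMono.monotone hql)
    refine le_trans ?_ (Real.sum_range_even_le_arctan (by norm_num) (by norm_num) 4)
    norm_num [Finset.sum_range_succ]
  have harctan_u : Real.arctan q ≤ 0.364863859909 := by
    refine (Real.arctan_strictMono.monotone hqu).trans ?_
    refine (Real.arctan_le_sum_range_odd (by norm_num) (by norm_num) 3).trans ?_
    norm_num [Finset.sum_range_succ]
  have hpil := Real.pi_gt_d20
  have hpiu := Real.pi_lt_d20
  rw [sigma_eq_one_sub_arctan, ← hq]
  constructor
  · have : 2 / Real.pi * Real.arctan q ≤ 2 / 3.14159265358979323846 * 0.364863859909 := by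
      gcongr
    linarith
  · have : 2 / 3.14159265358979323847 * 0.364863824032 ≤ 2 / Real.pi * Real.arctan q := by
      gcongr
    linarith

lemma sigma_pos : 0 < sigma := by linarith [sigma_bounds.1]

lemma sigma_lt_one : sigma < 1 := by linarith [sigma_bounds.2]

lemma cos_sigma_mul_pi : Real.cos (sigma * Real.pi) = -√5 / 3 := by
  have h5 : √5 ^ 2 = 5 := Real.sq_sqrt (by norm_num)
  have hσπ : sigma * Real.pi = 2 * Real.arctan ((3 + √5) / 2) := by
    rw [sigma]
    field_simp
  rw [hσπ, Real.cos_two_mul, Real.cos_sq_arctan]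
  field_simp
  nlinarith [h5]

noncomputable def muScale : ℝ := √(2 / (1 - Real.cos (sigma * Real.pi)))

lemma muScale_bounds : 1.070466269319 ≤ muScale ∧ muScale ≤ 1.07046626933 := by
  obtain ⟨h5l, h5u⟩ := sqrt_five_bounds
  have h5 : √5 ^ 2 = 5 := Real.sq_sqrt (by norm_num)
  have hsq : 2 / (1 - Real.cos (sigma * Real.pi)) = 6 / (3 + √5) := by
    rw [cos_sigma_mul_pi, div_eq_div_iff (by linarith) (by positivity)]
    ring
  rw [muScale, hsq]
  constructor
  · refine Real.le_sqrt_of_sq_le ?_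
    rw [le_div_iff₀ (by positivity)]
    nlinarith
  · refine Real.sqrt_le_iff.2 ⟨by norm_num, ?_⟩
    rw [div_le_iff₀ (by positivity)]
    nlinarith

lemma muScale_pos : 0 < muScale := by linarith [muScale_bounds.1]

lemma nu_bounds : -0.490711985 ≤ nu ∧ nu ≤ -0.490711984933 := by
  obtain ⟨h5l, h5u⟩ := sqrt_five_bounds
  constructor <;> (rw [nu]; linarith)

lemma nu_neg : nu < 0 := by linarith [nu_bounds.2]

lemma cpow_ofReal_mul_I {κ : ℝ} (hκ : 0 < κ) (s : ℝ) :
    ((κ : ℂ) * I) ^ (s : ℂ) = ((κ ^ s : ℝ) : ℂ) * exp (((s * Real.pi / 2 : ℝ) : ℂ) * I) := by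
  have hlog : log ((κ : ℂ) * I) = (Real.log κ : ℂ) + ((Real.pi / 2 : ℝ) : ℂ) * I := by
    rw [log, arg_real_mul I hκ, arg_I, norm_mul, norm_I, mul_one, norm_real,
      Real.norm_of_nonneg hκ.le]
  rw [cpow_def_of_ne_zero (by simp [hκ.ne']), hlog, Real.rpow_def_of_pos hκ, ofReal_exp,
    ← exp_add]
  push_cast
  ring_nf

lemma mu_div_cpow_ofReal_mul_I {κ : ℝ} (hκ : 0 < κ) :
    mu / ((κ : ℂ) * I) ^ (sigma : ℂ) =
      ((sigma * (sigma - 2) / 3 * muScale / κ ^ sigma : ℝ) : ℂ) := by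
  have hmu : mu = ((sigma * (sigma - 2) / 3 * muScale : ℝ) : ℂ) *
      exp (((sigma * Real.pi / 2 : ℝ) : ℂ) * I) := by
    rw [mu, muScale]
    push_cast
    ring
  rw [hmu, cpow_ofReal_mul_I hκ, mul_div_mul_right _ _ (exp_ne_zero _), ← ofReal_div]

lemma psi12_ofReal_mul_I {κ : ℝ} (hκ : 0 < κ) :
    psi12 (κ * I) = ((sigma * (sigma - 2) / 3 * muScale / κ ^ sigma *
      (-κ ^ 2 / (2 - sigma) + 1 / sigma) + nu : ℝ) : ℂ) := by
  rw [psi12, mu_div_cpow_ofReal_mul_I hκ, mul_pow, I_sq]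
  push_cast
  ring

-- `x^σ · ψ₁₂(xi)` for `x > 0`.
noncomputable def rootFn (x : ℝ) : ℝ := nu * x ^ sigma + muScale / 3 * (sigma * (x ^ 2 + 1) - 2)

lemma rootFn_eq_zero_of_psi12_eq_zero {κ : ℝ} (hκ : 0 < κ) (h : psi12 (κ * I) = 0) :
    rootFn κ = 0 := by
  rw [psi12_ofReal_mul_I hκ, ofReal_eq_zero] at h
  have hκσ : κ ^ sigma ≠ 0 := (Real.rpow_pos_of_pos hκ _).ne'
  have h2σ : 2 - sigma ≠ 0 := by linarith [sigma_lt_one]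
  have hrootFn : rootFn κ = κ ^ sigma * (sigma * (sigma - 2) / 3 * muScale / κ ^ sigma *
      (-κ ^ 2 / (2 - sigma) + 1 / sigma) + nu) := by
    rw [rootFn]
    field_simp [sigma_pos.ne']
    ring
  rw [hrootFn, h, mul_zero]

lemma one_lt_of_rootFn_eq_zero {κ : ℝ} (hκ : 0 < κ) (h : rootFn κ = 0) : 1 < κ := by
  by_contra! hκ1
  have hneg : sigma * (κ ^ 2 + 1) - 2 < 0 := by nlinarith [sigma_lt_one, sigma_pos]
  have := mul_neg_of_neg_of_pos nu_neg (Real.rpow_pos_of_pos hκ sigma)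
  have := mul_neg_of_pos_of_neg (div_pos muScale_pos three_pos) hneg
  rw [rootFn] at h
  linarith

lemma strictMonoOn_mul_rpow_add_mul_sq_add {a b c s : ℝ} (ha : a ≤ 0) (hs0 : 0 ≤ s)
    (hs1 : s ≤ 1) (hab : 0 < a * s + 2 * b) :
    StrictMonoOn (fun x => a * x ^ s + b * x ^ 2 + c) (Set.Ici 1) := by
  have hderiv : ∀ x : ℝ, 0 < x →
      HasDerivAt (fun x => a * x ^ s + b * x ^ 2 + c) (a * (s * x ^ (s - 1)) + b * (2 * x)) x := by
    intro x hx
    have h := ((Real.hasDerivAt_rpow_const (p := s) (Or.inl hx.ne')).const_mul a).add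
      ((hasDerivAt_pow 2 x).const_mul b)
    simpa using h.add_const c
  refine strictMonoOn_of_deriv_pos (convex_Ici 1) ?_ fun x hx => ?_
  · exact fun x hx => (hderiv x (by linarith [Set.mem_Ici.1 hx])).continuousAt.continuousWithinAt
  rw [interior_Ici, Set.mem_Ioi] at hx
  rw [(hderiv x (by linarith)).deriv]
  -- `x ^ (s - 1) ≤ 1` bounds the negative term below by `a * s`.
  have hpow : x ^ (s - 1) ≤ 1 := Real.rpow_le_one_of_one_le_of_nonpos hx.le (by linarith)
  nlinarith [mul_nonpos_of_nonpos_of_nonneg ha hs0]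

lemma rootFn_strictMonoOn : StrictMonoOn rootFn (Set.Ici 1) := by
  have h := strictMonoOn_mul_rpow_add_mul_sq_add (a := nu) (b := muScale * sigma / 3)
    (c := muScale / 3 * (sigma - 2)) nu_neg.le sigma_pos.le sigma_lt_one.le (by
      nlinarith [nu_bounds.1, sigma_bounds.1, sigma_bounds.2, muScale_bounds.1])
  convert h using 1
  funext x
  rw [rootFn]
  ring

lemma Real.exp_mul_le_rpow {a l s : ℝ} (hl : Real.exp l ≤ a) (hs : 0 ≤ s) :
    Real.exp (l * s) ≤ a ^ s := by
  rw [Real.exp_mul]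
  exact Real.rpow_le_rpow (Real.exp_pos l).le hl hs

lemma Real.rpow_le_exp_mul {a l s : ℝ} (ha : 0 ≤ a) (hl : a ≤ Real.exp l) (hs : 0 ≤ s) :
    a ^ s ≤ Real.exp (l * s) := by
  rw [Real.exp_mul]
  exact Real.rpow_le_rpow ha hl hs

lemma rpow_sigma_left_ge : 1.840911367675 ≤ (2.2142189 : ℝ) ^ sigma := by
  have hl : Real.exp 0.794899700121 ≤ 2.2142189 := by
    have := (abs_le.1 (Real.exp_bound (x := 0.794899700121) (by norm_num) (n := 13)
      (by norm_num))).2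
    norm_num [Finset.sum_range_succ, Nat.factorial] at this
    linarith
  have hexp : 1.840911367675 ≤ Real.exp (0.794899700121 * 0.767720452559) := by
    have := (abs_le.1 (Real.exp_bound (x := 0.794899700121 * 0.767720452559) (by norm_num)
      (n := 13) (by norm_num))).1
    norm_num [Finset.sum_range_succ, Nat.factorial] at this ⊢
    linarith
  calc (1.840911367675 : ℝ) ≤ Real.exp (0.794899700121 * 0.767720452559) := hexp
    _ ≤ Real.exp (0.794899700121 * sigma) := by gcongr; exact sigma_bounds.1
    _ ≤ (2.2142189 : ℝ) ^ sigma := Real.exp_mul_le_rpow hl sigma_pos.le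

lemma rpow_sigma_right_le : (2.2142192 : ℝ) ^ sigma ≤ 1.840911592871 := by
  have hl : 2.2142192 ≤ Real.exp 0.79489983581 := by
    have := (abs_le.1 (Real.exp_bound (x := 0.79489983581) (by norm_num) (n := 13)
      (by norm_num))).1
    norm_num [Finset.sum_range_succ, Nat.factorial] at this
    linarith
  have hexp : Real.exp (0.79489983581 * 0.7677204754) ≤ 1.840911592871 := by
    have := (abs_le.1 (Real.exp_bound (x := 0.79489983581 * 0.7677204754) (by norm_num)
      (n := 13) (by norm_num))).2
    norm_num [Finset.sum_range_succ, Nat.factorial] at this ⊢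
    linarith
  calc (2.2142192 : ℝ) ^ sigma ≤ Real.exp (0.79489983581 * sigma) :=
        Real.rpow_le_exp_mul (by norm_num) hl sigma_pos.le
    _ ≤ Real.exp (0.79489983581 * 0.7677204754) := by gcongr; exact sigma_bounds.2
    _ ≤ 1.840911592871 := hexp

lemma rootFn_left_neg : rootFn 2.2142189 < 0 := by
  obtain ⟨hν, hν'⟩ := nu_bounds
  obtain ⟨hσ, hσ'⟩ := sigma_bounds
  have hpow := rpow_sigma_left_ge
  have hscale : muScale / 3 * (sigma * (2.2142189 ^ 2 + 1) - 2) ≤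
      1.07046626933 / 3 * (0.7677204754 * (2.2142189 ^ 2 + 1) - 2) := by
    gcongr
    · nlinarith
    · exact muScale_bounds.2
  rw [rootFn]
  nlinarith

lemma rootFn_right_pos : 0 < rootFn 2.2142192 := by
  obtain ⟨hν, hν'⟩ := nu_bounds
  obtain ⟨hσ, hσ'⟩ := sigma_bounds
  have hpow := rpow_sigma_right_le
  have hscale : 1.070466269319 / 3 * (0.767720452559 * (2.2142192 ^ 2 + 1) - 2) ≤
      muScale / 3 * (sigma * (2.2142192 ^ 2 + 1) - 2) := by
    have := muScale_bounds.1
    gcongr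
  rw [rootFn]
  nlinarith [Real.rpow_pos_of_pos (show (0 : ℝ) < 2.2142192 by norm_num) sigma]

lemma mem_Ioo_of_rootFn_eq_zero {κ : ℝ} (hκ : 0 < κ) (h : rootFn κ = 0) :
    κ ∈ Set.Ioo 2.2142189 2.2142192 := by
  have hκ1 : κ ∈ Set.Ici 1 := (one_lt_of_rootFn_eq_zero hκ h).le
  constructor
  · refine (rootFn_strictMonoOn.lt_iff_lt (by norm_num) hκ1).1 ?_
    rw [h]
    exact rootFn_left_neg
  · refine (rootFn_strictMonoOn.lt_iff_lt hκ1 (by norm_num)).1 ?_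
    rw [h]
    exact rootFn_right_pos

lemma tauOf_eq_of_rootFn_eq_zero {κ : ℝ} (hκ : 0 < κ) (h : rootFn κ = 0) :
    tauOf κ = -2 * (κ ^ 2 + 1) * (sigma * (sigma - 2) / 3 * muScale / κ ^ sigma) := by
  have hκσ : 0 < κ ^ sigma := Real.rpow_pos_of_pos hκ _
  -- At a root, `2 - σ(κ²+1) = 3ν κ^σ / muScale`, which is nonzero.
  have hden : 2 - sigma * (κ ^ 2 + 1) ≠ 0 := by
    intro h0
    rw [rootFn, show sigma * (κ ^ 2 + 1) - 2 = 0 by linarith, mul_zero, add_zero] at h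
    exact (mul_neg_of_neg_of_pos nu_neg hκσ).ne h
  rw [tauOf, div_eq_iff hden]
  field_simp
  rw [rootFn] at h
  linear_combination 3 * sigma * (2 - sigma) * h

lemma tauOf_eq_div (κ : ℝ) :
    tauOf κ = 2 * -nu * (sigma * (2 - sigma)) / (sigma - 2 / (κ ^ 2 + 1)) := by
  have hu : κ ^ 2 + 1 ≠ 0 := by positivity
  rw [tauOf, sub_div' hu, div_div_eq_mul_div, ← neg_div_neg_eq]
  ring_nf

lemma tauOf_bounds {κ : ℝ} (hκ : κ ∈ Set.Ioo 2.2142189 2.2142192) :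
    2.1647 < tauOf κ ∧ tauOf κ < 2.1648 := by
  obtain ⟨hκl, hκu⟩ := hκ
  obtain ⟨hν, hν'⟩ := nu_bounds
  obtain ⟨hσ, hσ'⟩ := sigma_bounds
  have hul : (2.2142189 : ℝ) ^ 2 + 1 ≤ κ ^ 2 + 1 := by gcongr
  have hup : κ ^ 2 + 1 ≤ (2.2142192 : ℝ) ^ 2 + 1 := by gcongr
  set p := sigma * (2 - sigma) with hp
  have hpl : 0.767720452559 * (2 - 0.767720452559) ≤ p := by nlinarith
  have hpu : p ≤ 0.7677204754 * (2 - 0.7677204754) := by nlinarith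
  have hden : 0.767720452559 - 2 / (2.2142189 ^ 2 + 1) ≤ sigma - 2 / (κ ^ 2 + 1) := by gcongr
  rw [tauOf_eq_div]
  constructor
  · calc (2.1647 : ℝ)
        < 2 * 0.490711984933 * (0.767720452559 * (2 - 0.767720452559)) /
            (0.7677204754 - 2 / (2.2142192 ^ 2 + 1)) := by norm_num
      _ ≤ 2 * -nu * p / (sigma - 2 / (κ ^ 2 + 1)) := by
        gcongr
        all_goals nlinarith
  · calc 2 * -nu * p / (sigma - 2 / (κ ^ 2 + 1))
        ≤ 2 * 0.490711985 * (0.7677204754 * (2 - 0.7677204754)) /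
            (0.767720452559 - 2 / (2.2142189 ^ 2 + 1)) := by
          gcongr
          all_goals linarith
      _ < 2.1648 := by norm_num

lemma hasDerivAt_div_cpow_mul_add {c ν s z : ℂ} (hs : s ≠ 0) (hs2 : 2 - s ≠ 0)
    (hz : z ∈ slitPlane) :
    HasDerivAt (fun w => c / w ^ s * (w ^ 2 / (2 - s) + 1 / s) + ν)
      (c / z ^ (1 + s) * (z ^ 2 - 1)) z := by
  have hz0 : z ≠ 0 := slitPlane_ne_zero hz
  have hzs : z ^ s ≠ 0 := by simp [cpow_eq_zero_iff, hz0]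
  have hinv : HasDerivAt (fun w => (w ^ s)⁻¹) (-(s * z ^ (s - 1)) / (z ^ s) ^ 2) z :=
    (hasStrictDerivAt_cpow_const hz).hasDerivAt.inv hzs
  have hpoly : HasDerivAt (fun w => w ^ 2 / (2 - s) + 1 / s) (2 * z / (2 - s)) z := by
    simpa using ((hasDerivAt_pow 2 z).div_const (2 - s)).add_const (1 / s)
  have hfun : (fun w => c / w ^ s * (w ^ 2 / (2 - s) + 1 / s) + ν) =
      fun w => c * (w ^ s)⁻¹ * (w ^ 2 / (2 - s) + 1 / s) + ν := by
    simp only [div_eq_mul_inv c]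
  rw [hfun]
  refine (((hinv.const_mul c).mul hpoly).add_const ν).congr_deriv ?_
  rw [cpow_sub _ _ hz0, cpow_add _ _ hz0, cpow_one]
  field_simp
  ring

lemma deriv_psi12 {z : ℂ} (hz : z ∈ slitPlane) :
    deriv psi12 z = mu / z ^ ((1 : ℂ) + (sigma : ℂ)) * (z ^ 2 - 1) := by
  have hσ : (sigma : ℂ) ≠ 0 := ofReal_ne_zero.2 sigma_pos.ne'
  have h2σ : 2 - (sigma : ℂ) ≠ 0 := by
    rw [← ofReal_ofNat, ← ofReal_sub, ofReal_ne_zero]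
    linarith [sigma_lt_one]
  exact (hasDerivAt_div_cpow_mul_add hσ h2σ hz).deriv

lemma deriv_psi12_mul_eq_one {κ τ : ℝ} (hκ : 0 < κ) (hτ : τ ≠ 0)
    (hτ_eq : (τ : ℂ) = -2 * ((κ : ℂ) ^ 2 + 1) * mu / ((κ : ℂ) * I) ^ (sigma : ℂ)) :
    deriv psi12 ((κ : ℂ) * I) * (2 * (κ : ℂ) * I / (τ : ℂ)) = 1 := by
  have hκ0 : (κ : ℂ) ≠ 0 := ofReal_ne_zero.2 hκ.ne'
  have hκI : (κ : ℂ) * I ≠ 0 := mul_ne_zero hκ0 I_ne_zero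
  have hP : ((κ : ℂ) * I) ^ (sigma : ℂ) ≠ 0 := by simp [cpow_eq_zero_iff, hκI]
  have hτ0 : (τ : ℂ) ≠ 0 := ofReal_ne_zero.2 hτ
  have hτ_mul : (τ : ℂ) * ((κ : ℂ) * I) ^ (sigma : ℂ) = -2 * ((κ : ℂ) ^ 2 + 1) * mu := by
    rw [hτ_eq, div_mul_cancel₀ _ hP]
  rw [deriv_psi12 (by simp [mem_slitPlane_iff, hκ.ne']), cpow_add _ _ hκI, cpow_one]
  field_simp
  linear_combination -hτ_mul + 2 * mu * (κ : ℂ) ^ 2 * I_sq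

theorem stmt3 (κ : ℝ) (hκ : 0 < κ) (hroot : psi12 (κ * I) = 0) :
    ((tauOf κ : ℂ) = -2 * ((κ : ℂ) ^ 2 + 1) * mu / ((κ : ℂ) * I) ^ (sigma : ℂ)) ∧
    (2.1647 < tauOf κ ∧ tauOf κ < 2.1648) ∧
    (∀ z ∈ Complex.slitPlane,
      deriv psi12 z = mu / z ^ ((1 : ℂ) + (sigma : ℂ)) * (z ^ 2 - 1)) ∧
    deriv psi12 ((κ : ℂ) * I) * (2 * (κ : ℂ) * I / (tauOf κ : ℂ)) = 1 := by
  have hrootFn := rootFn_eq_zero_of_psi12_eq_zero hκ hroot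
  have hτ := tauOf_bounds (mem_Ioo_of_rootFn_eq_zero hκ hrootFn)
  have hτ_eq : (tauOf κ : ℂ) = -2 * ((κ : ℂ) ^ 2 + 1) * mu / ((κ : ℂ) * I) ^ (sigma : ℂ) := by
    rw [mul_div_assoc, mu_div_cpow_ofReal_mul_I hκ, tauOf_eq_of_rootFn_eq_zero hκ hrootFn]
    push_cast
    ring
  exact ⟨hτ_eq, hτ, fun z hz => deriv_psi12 hz,
    deriv_psi12_mul_eq_one hκ (by linarith [hτ.1] : (0 : ℝ) < tauOf κ).ne' hτ_eq⟩
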